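/- Let (V, ⟨·,·⟩) be a real inner product space, β a continuous linear functional on V with operator norm ‖β‖ < 1, and F(y) := ‖y‖ + β(y). Suppose n, u ∈ V satisfy F(n) = 1, F(u) = 1, and g_n(n,u) = 0, where g_n(a,b) := (1/2)·D²(F²)(n)[a,b]. Then g_n(u,u) = F(−u)/(1 − β(n)). -/

import Mathlib

/-!
Away from the origin the Randers norm `F = ‖·‖ + β` has differential
`ℓ_y = ⟪y, ·⟫ / ‖y‖ + β`, and differentiating `F²` twice gives
`g_y(v, w) = ℓ_y v · ℓ_y w + F(y) (⟪v, w⟫ - ⟪y, v⟫⟪y, w⟫ / ‖y‖²) / ‖y‖`.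
Since `g_n(n, ·) = F(n) ℓ_n`, the orthogonality `g_n(n, u) = 0` says `ℓ_n u = 0`, i.e.
`⟪n, u⟫ = -β(u) ‖n‖`. Then `g_n(u, u) = (‖u‖² - β(u)²) / ‖n‖ = F(u) F(-u) / ‖n‖`,
and `‖n‖ = 1 - β(n)` because `F(n) = 1`.
-/

open scoped RealInnerProductSpace

/-- The fundamental tensor `g_y(u, v) := (1/2) D²(F²)(y)[u, v]` of the Randers norm
`F(y) = ‖y‖ + β(y)` on a real inner product space. -/
noncomputable def randersG (V : Type*) [NormedAddCommGroup V] [InnerProductSpace ℝ V]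
    (β : V →L[ℝ] ℝ) (y u v : V) : ℝ :=
  (1 / 2) * (fderiv ℝ (fderiv ℝ (fun x => (‖x‖ + β x) ^ 2)) y u) v

open Filter Topology

section
variable {V : Type*} [NormedAddCommGroup V] [InnerProductSpace ℝ V]

theorem hasFDerivAt_norm_of_ne_zero {x : V} (hx : x ≠ 0) :
    HasFDerivAt (‖·‖) (‖x‖⁻¹ • innerSL ℝ x) x := by
  have h := (hasStrictFDerivAt_norm_sq x).hasFDerivAt.sqrt (by positivity)
  simp only [Real.sqrt_sq (norm_nonneg _)] at h
  convert h using 1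
  ext v
  simp only [smul_apply, coe_innerSL_apply, smul_eq_mul, one_div, mul_inv_rev, nsmul_eq_mul,
    Nat.cast_ofNat]
  field_simp

theorem hasFDerivAt_norm_inv {x : V} (hx : x ≠ 0) :
    HasFDerivAt (fun y : V => ‖y‖⁻¹) (-(‖x‖ ^ 3)⁻¹ • innerSL ℝ x) x := by
  refine ((hasDerivAt_inv (norm_ne_zero_iff.mpr hx)).comp_hasFDerivAt x
    (hasFDerivAt_norm_of_ne_zero hx)).congr_fderiv ?_
  rw [neg_smul, neg_smul, smul_smul, ← mul_inv, ← pow_succ]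

noncomputable def randersDeriv (β : V →L[ℝ] ℝ) (x : V) : V →L[ℝ] ℝ :=
  ‖x‖⁻¹ • innerSL ℝ x + β

variable (β : V →L[ℝ] ℝ) {x : V}

theorem randersDeriv_apply (v : V) : randersDeriv β x v = ⟪x, v⟫ / ‖x‖ + β v := by
  simp [randersDeriv, div_eq_inv_mul]

theorem randersDeriv_self : randersDeriv β x x = ‖x‖ + β x := by
  rcases eq_or_ne x 0 with rfl | hx
  · simp
  · rw [randersDeriv_apply, real_inner_self_eq_norm_sq]
    field_simp

theorem hasFDerivAt_randers (hx : x ≠ 0) :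
    HasFDerivAt (fun y => ‖y‖ + β y) (randersDeriv β x) x :=
  (hasFDerivAt_norm_of_ne_zero hx).add β.hasFDerivAt

theorem fderiv_randers_sq_eventuallyEq (hx : x ≠ 0) :
    fderiv ℝ (fun y => (‖y‖ + β y) ^ 2) =ᶠ[𝓝 x]
      fun y => (2 * (‖y‖ + β y)) • randersDeriv β y := by
  filter_upwards [isOpen_compl_singleton.mem_nhds hx] with y hy
  convert ((hasFDerivAt_randers β hy).pow 2).fderiv using 1
  ext v
  simp only [FunLike.coe_smul, Pi.smul_apply, smul_eq_mul]
  ring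

theorem randersG_apply (hx : x ≠ 0) (v w : V) :
    randersG V β x v w = randersDeriv β x v * randersDeriv β x w
      + (‖x‖ + β x) * (⟪v, w⟫ - ⟪x, v⟫ * ⟪x, w⟫ / ‖x‖ ^ 2) / ‖x‖ := by
  have hI : HasFDerivAt (fun y : V => innerSL ℝ y)
      (innerSL ℝ (E := V) : V →L[ℝ] V →L[ℝ] ℝ) x :=
    ContinuousLinearMap.hasFDerivAt _
  have hD : HasFDerivAt (randersDeriv β) _ x := ((hasFDerivAt_norm_inv hx).smul hI).add_const β
  have h := ((hasFDerivAt_randers β hx).const_mul 2).fun_smul hD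
  rw [randersG, (fderiv_randers_sq_eventuallyEq β hx).fderiv_eq, h.fderiv]
  simp only [one_div, neg_smul, smul_add, add_apply, smul_apply,
    ContinuousLinearMap.smulRight_apply, neg_apply, coe_innerSL_apply, smul_eq_mul, smul_neg,
    randersDeriv_apply]
  -- `hI` coerces `innerSL ℝ` as an `ℝ`-linear rather than a conjugate-linear map
  erw [innerSL_apply_apply]
  field_simp
  ring

theorem randersG_self_left (hx : x ≠ 0) (w : V) :
    randersG V β x x w = (‖x‖ + β x) * randersDeriv β x w := by
  rw [randersG_apply β hx, randersDeriv_self, real_inner_self_eq_norm_sq]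
  field_simp
  ring

theorem randersG_self_of_randersDeriv_eq_zero (hx : x ≠ 0) {w : V}
    (hw : randersDeriv β x w = 0) :
    randersG V β x w w = (‖x‖ + β x) * (‖w‖ ^ 2 - β w ^ 2) / ‖x‖ := by
  have hinner : ⟪x, w⟫ = -(β w * ‖x‖) := by
    have hx₀ : ‖x‖ ≠ 0 := norm_ne_zero_iff.mpr hx
    rw [randersDeriv_apply] at hw
    field_simp at hw
    linarith
  rw [randersG_apply β hx, hw, hinner, real_inner_self_eq_norm_sq]
  field_simp
  ring

end

theorem randers_tangent_bound_general
    (V : Type*) [NormedAddCommGroup V] [InnerProductSpace ℝ V]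
    (β : V →L[ℝ] ℝ)
    (n u : V) (hn : ‖n‖ + β n = 1) (hu : ‖u‖ + β u = 1)
    (horth : randersG V β n n u = 0) :
    randersG V β n u u = (‖-u‖ + β (-u)) / (1 - β n) := by
  have hn0 : n ≠ 0 := by
    rintro rfl
    simp at hn
  have hdu : randersDeriv β n u = 0 := by
    rwa [randersG_self_left β hn0, hn, one_mul] at horth
  rw [randersG_self_of_randersDeriv_eq_zero β hn0 hdu, hn, norm_neg, map_neg,
    show 1 - β n = ‖n‖ by linarith]
  congr 1
  linear_combination (‖u‖ - β u) * hu

/-- Section 6 of the paper: for the Randers norm `F = ‖·‖ + β` with `‖β‖ < 1`, if `F(n) = 1`,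
`F(u) = 1` and `g_n(n, u) = 0`, then `g_n(u, u) = F(−u)/(1 − β(n))`. -/
theorem randers_tangent_bound
    (V : Type*) [NormedAddCommGroup V] [InnerProductSpace ℝ V]
    (β : V →L[ℝ] ℝ) (hβ : ‖β‖ < 1)
    (n u : V) (hn : ‖n‖ + β n = 1) (hu : ‖u‖ + β u = 1)
    (horth : randersG V β n n u = 0) :
    randersG V β n u u = (‖-u‖ + β (-u)) / (1 - β n) :=
  randers_tangent_bound_general V β n u hn hu horth
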